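/- arXiv:1406.7427 — 3 statements merged into one kernel-verified Lean document; each statement's English description precedes it below -/
import Mathlib

section
/- There is a finite constant M > 0 such that for every integer k ≥ 1 and every x ≥ 0, x^2 |H_k''(x)| ≤ M·k, where H_k''(x) = ((k-1) - x) x^{k-2} e^{-x}/(k-1)! is the second derivative of H_k; moreover sup_{k ≥ 1} sup_{x ≥ 0} x^2|H_k''(x)|/k > 0. -/
open MeasureTheory Real Filter Set

noncomputable section

/-- `Hsecond k` : the second derivative of the Gamma(k,1) distribution function,
`x ↦ ((k-1) - x) x^{k-2} e^{-x}/(k-1)!`. -/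
def Hsecond (k : ℕ) (x : ℝ) : ℝ :=
  (((k : ℝ) - 1) - x) * x ^ ((k : ℝ) - 2) * Real.exp (-x) / (Nat.factorial (k - 1))

/-!
Write `x = a²` and `k = b²`. Since `log (a / b) ≤ a / b - 1`, the function `x ↦ x^k e^{-x}` is
bounded by its maximum `k^k e^{-k}` times the Gaussian factor `e^{-(a - b)²}`, while
`|k - 1 - x| ≤ 1 + 2b|a - b| + (a - b)²`, and this polynomial in `|a - b|` is absorbed by the
Gaussian factor at the price of a factor `1 + b ≤ 2√k`. Stirling's bound `√(2πk) (k/e)^k ≤ k!`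
then gives `x² |H_k''(x)| ≤ k`.
-/

lemma mul_log_sub_le_mul_log_sub_sub_sq {t x : ℝ} (ht : 0 < t) (hx : 0 < x) :
    t * log x - x ≤ t * log t - t - (√x - √t) ^ 2 := by
  have ha : 0 < √x := sqrt_pos.mpr hx
  have hb : 0 < √t := sqrt_pos.mpr ht
  have hlog : log √x - log √t ≤ √x / √t - 1 := by
    rw [← log_div ha.ne' hb.ne']
    exact log_le_sub_one_of_pos (div_pos ha hb)
  have hscaled : √t ^ 2 * (log √x - log √t) ≤ √t * √x - √t ^ 2 := by
    calc √t ^ 2 * (log √x - log √t) ≤ √t ^ 2 * (√x / √t - 1) := by gcongr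
      _ = √t * √x - √t ^ 2 := by field_simp
  rw [← sq_sqrt hx.le, ← sq_sqrt ht.le, log_pow, log_pow, sqrt_sq ha.le, sqrt_sq hb.le]
  push_cast
  nlinarith

lemma pow_mul_exp_neg_le {k : ℕ} (hk : k ≠ 0) {x : ℝ} (hx : 0 ≤ x) :
    x ^ k * exp (-x) ≤ (k : ℝ) ^ k * exp (-k) * exp (-(√x - √k) ^ 2) := by
  rcases hx.eq_or_lt with rfl | hx
  · rw [zero_pow hk, zero_mul]
    positivity
  have ht : (0 : ℝ) < k := by positivity
  have hpow (y : ℝ) (hy : 0 < y) : y ^ k = exp (k * log y) := by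
    rw [← log_pow, exp_log (pow_pos hy k)]
  rw [hpow x hx, hpow k ht, ← exp_add, ← exp_add, ← exp_add, exp_le_exp]
  linarith [mul_log_sub_le_mul_log_sub_sub_sq ht hx]

lemma abs_sub_one_sub_le {t x : ℝ} (ht : 0 ≤ t) (hx : 0 ≤ x) :
    |t - 1 - x| ≤ 1 + 2 * √t * |√x - √t| + (√x - √t) ^ 2 := by
  have hsplit : t - 1 - x = -(1 + 2 * √t * (√x - √t) + (√x - √t) ^ 2) := by
    linear_combination sq_sqrt hx - sq_sqrt ht
  have hmul : |√t * (√x - √t)| = √t * |√x - √t| := by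
    rw [abs_mul, abs_of_nonneg (sqrt_nonneg t)]
  rw [hsplit, abs_neg, abs_le]
  constructor <;> nlinarith [abs_le.mp hmul.le, neg_abs_le (√t * (√x - √t)),
    le_abs_self (√t * (√x - √t)), sq_nonneg (√x - √t)]

lemma one_add_two_mul_abs_add_sq_le {b : ℝ} (hb : 0 ≤ b) (u : ℝ) :
    1 + 2 * b * |u| + u ^ 2 ≤ (1 + b) * exp (u ^ 2) := by
  have hexp : 1 + u ^ 2 ≤ exp (u ^ 2) := by linarith [add_one_le_exp (u ^ 2)]
  have htwo : 2 * |u| ≤ 1 + u ^ 2 := by nlinarith [sq_abs u, sq_nonneg (|u| - 1)]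
  nlinarith

lemma abs_sub_one_sub_mul_pow_mul_exp_neg_le_factorial {k : ℕ} (hk : k ≠ 0) {x : ℝ}
    (hx : 0 ≤ x) : |(k : ℝ) - 1 - x| * (x ^ k * exp (-x)) ≤ k.factorial := by
  have ht : (0 : ℝ) ≤ k := k.cast_nonneg
  have hone : 1 ≤ √(k : ℝ) := one_le_sqrt.mpr (by exact_mod_cast Nat.one_le_iff_ne_zero.mpr hk)
  have hpi : 2 * √(k : ℝ) ≤ √(2 * π * k) :=
    calc 2 * √(k : ℝ) = √(2 ^ 2 * k) := by rw [sqrt_mul' _ ht, sqrt_sq zero_le_two]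
      _ ≤ √(2 * π * k) := sqrt_le_sqrt (by nlinarith [pi_gt_three])
  set u := √x - √k
  calc |(k : ℝ) - 1 - x| * (x ^ k * exp (-x))
      ≤ (1 + 2 * √k * |u| + u ^ 2) * ((k : ℝ) ^ k * exp (-k) * exp (-u ^ 2)) := by
        exact mul_le_mul (abs_sub_one_sub_le ht hx) (pow_mul_exp_neg_le hk hx) (by positivity)
          (by positivity)
    _ ≤ (1 + √k) * exp (u ^ 2) * ((k : ℝ) ^ k * exp (-k) * exp (-u ^ 2)) := by
        gcongr
        exact one_add_two_mul_abs_add_sq_le (sqrt_nonneg _) u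
    _ = (1 + √k) * (k / exp 1) ^ k := by
        have hcancel : exp (u ^ 2) * exp (-u ^ 2) = 1 := by rw [← exp_add, add_neg_cancel, exp_zero]
        rw [div_pow, ← exp_nat_mul, mul_one, div_eq_mul_inv, ← exp_neg]
        linear_combination ((1 + √k) * k ^ k * exp (-k)) * hcancel
    _ ≤ √(2 * π * k) * (k / exp 1) ^ k := by gcongr; linarith
    _ ≤ k.factorial := Stirling.le_factorial_stirling k

lemma sq_mul_abs_Hsecond {k : ℕ} (hk : k ≠ 0) {x : ℝ} (hx : 0 ≤ x) :
    x ^ 2 * |Hsecond k x| = |(k : ℝ) - 1 - x| * (x ^ k * exp (-x)) / (k - 1).factorial := by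
  -- At `x = 0, k = 1` this uses the convention `0 ^ (-1 : ℝ) = 0`.
  have hpow : x ^ 2 * x ^ ((k : ℝ) - 2) = x ^ k := by
    rw [← rpow_natCast x 2, ← rpow_add' hx (by simpa using hk), ← rpow_natCast]
    norm_num
  rw [Hsecond, abs_div, abs_mul, abs_mul, abs_of_nonneg (rpow_nonneg hx _),
    abs_of_pos (exp_pos _), Nat.abs_cast, ← hpow]
  ring

lemma sq_mul_abs_Hsecond_le {k : ℕ} (hk : k ≠ 0) {x : ℝ} (hx : 0 ≤ x) :
    x ^ 2 * |Hsecond k x| ≤ k := by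
  rw [sq_mul_abs_Hsecond hk hx, div_le_iff₀ (by positivity), ← Nat.cast_mul,
    Nat.mul_factorial_pred hk]
  exact abs_sub_one_sub_mul_pow_mul_exp_neg_le_factorial hk hx

/-- There is a finite constant `M > 0` such that for every integer `k ≥ 1` and every `x ≥ 0`,
`x² |H_k''(x)| ≤ M·k`; moreover `sup_{k ≥ 1} sup_{x ≥ 0} x²|H_k''(x)|/k > 0`. -/
theorem x_sq_Hsecond_bound :
    ∃ M : ℝ, 0 < M ∧
      (∀ k : ℕ, 1 ≤ k → ∀ x : ℝ, 0 ≤ x → x ^ 2 * |Hsecond k x| ≤ M * k) ∧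
      0 < sSup {y : ℝ | ∃ k : ℕ, 1 ≤ k ∧ ∃ x : ℝ, 0 ≤ x ∧ y = x ^ 2 * |Hsecond k x| / k} := by
  have hbound (k : ℕ) (hk : 1 ≤ k) (x : ℝ) (hx : 0 ≤ x) : x ^ 2 * |Hsecond k x| ≤ 1 * k := by
    rw [one_mul]
    exact sq_mul_abs_Hsecond_le (Nat.one_le_iff_ne_zero.mp hk) hx
  refine ⟨1, one_pos, hbound,
    (exp_pos (-1)).trans_le (le_csSup ⟨1, ?_⟩ ⟨1, le_rfl, 1, zero_le_one, ?_⟩)⟩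
  · rintro _ ⟨k, hk, x, hx, rfl⟩
    rw [div_le_iff₀ (by exact_mod_cast hk)]
    exact hbound k hk x hx
  · norm_num [Hsecond, abs_of_pos (exp_pos _)]
end
end

section
/- For every integer k ≥ 1 and every real x > 0 with k/x ≤ 1/2, the Gamma(k,1) tail satisfies 1 - H_k(x) ≤ 2 x^{k-1} e^{-x}/(k-1)!. -/
open MeasureTheory Real Filter Set

noncomputable section

/-- `Hcdf k` : the Gamma(k,1) distribution function. -/
def Hcdf (k : ℕ) (x : ℝ) : ℝ :=
  ∫ t in (0:ℝ)..x, t ^ (k - 1) * Real.exp (-t) / (Nat.factorial (k - 1))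

/-! The antiderivative of `t ^ n * e^{-t} / n!` is `-e^{-t} ∑_{j ≤ n} t ^ j / j!`, so
`1 - H_k(x)` is `e^{-x}` times a truncated exponential series. When `x ≥ 2k` each term of that
series is at most half the next, so the series is at most twice its last term
`x ^ (k - 1) / (k - 1)!`. -/

open Finset

lemma sum_range_succ_le_two_mul {α : Type*} [Semiring α] [PartialOrder α] [IsOrderedAddMonoid α]
    {a : ℕ → α} {n : ℕ} (h₀ : 0 ≤ a 0) (h : ∀ j < n, 2 * a j ≤ a (j + 1)) :
    ∑ j ∈ range (n + 1), a j ≤ 2 * a n := by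
  induction n with
  | zero => simpa [two_mul] using le_add_of_nonneg_right h₀
  | succ n ih =>
    calc ∑ j ∈ range (n + 2), a j
        = ∑ j ∈ range (n + 1), a j + a (n + 1) := sum_range_succ _ _
      _ ≤ 2 * a n + a (n + 1) := by gcongr; exact ih fun j hj => h j (by omega)
      _ ≤ a (n + 1) + a (n + 1) := by gcongr; exact h n n.lt_succ_self
      _ = 2 * a (n + 1) := (two_mul _).symm

lemma pow_succ_div_factorial_succ (x : ℝ) (n : ℕ) :
    x ^ (n + 1) / (n + 1).factorial = x / (n + 1) * (x ^ n / n.factorial) := by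
  push_cast [Nat.factorial_succ]
  field_simp
  ring

lemma two_mul_pow_div_factorial_le {x : ℝ} {n : ℕ} (hx : 2 * (n + 1) ≤ x) :
    2 * (x ^ n / n.factorial) ≤ x ^ (n + 1) / (n + 1).factorial := by
  rw [pow_succ_div_factorial_succ]
  gcongr
  · have : 0 ≤ x := by linarith
    positivity
  · rw [le_div_iff₀ (by positivity)]
    exact hx

lemma hasDerivAt_sum_range_pow_div_factorial (n : ℕ) (t : ℝ) :
    HasDerivAt (fun s : ℝ => ∑ j ∈ range (n + 1), s ^ j / j.factorial)
      (∑ j ∈ range n, t ^ j / j.factorial) t := by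
  induction n with
  | zero => simpa using hasDerivAt_const t (1 : ℝ)
  | succ n ih =>
    have hpow : HasDerivAt (fun s : ℝ => s ^ (n + 1) / (n + 1).factorial)
        (t ^ n / n.factorial) t := by
      refine ((hasDerivAt_pow (n + 1) t).div_const ((n + 1).factorial : ℝ)).congr_deriv ?_
      push_cast [Nat.factorial_succ, Nat.add_sub_cancel]
      field_simp
    simpa only [← sum_range_succ] using ih.fun_add hpow

lemma hasDerivAt_neg_exp_mul_sum_range (n : ℕ) (t : ℝ) :
    HasDerivAt (fun s : ℝ => -(exp (-s) * ∑ j ∈ range (n + 1), s ^ j / j.factorial))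
      (t ^ n * exp (-t) / n.factorial) t := by
  have hexp : HasDerivAt (fun s : ℝ => exp (-s)) (-exp (-t)) t := by
    simpa using (hasDerivAt_neg t).exp
  refine (hexp.mul (hasDerivAt_sum_range_pow_div_factorial n t)).neg.congr_deriv ?_
  rw [sum_range_succ]
  ring

-- `k - 1 + 1` rather than `k`: by truncated subtraction `Hcdf 0 = Hcdf 1`.
lemma one_sub_Hcdf (k : ℕ) (x : ℝ) :
    1 - Hcdf k x = exp (-x) * ∑ j ∈ range (k - 1 + 1), x ^ j / j.factorial := by
  unfold Hcdf
  generalize k - 1 = n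
  rw [intervalIntegral.integral_eq_sub_of_hasDerivAt
    (fun t _ => hasDerivAt_neg_exp_mul_sum_range n t)
    (Continuous.intervalIntegrable (by fun_prop) _ _)]
  simp [sum_range_succ']

theorem gamma_tail_bound_general (k : ℕ) (x : ℝ) (hx : 0 < x)
    (hkx : (k : ℝ) / x ≤ 1 / 2) :
    1 - Hcdf k x ≤ 2 * x ^ (k - 1) * Real.exp (-x) / (Nat.factorial (k - 1)) := by
  have h2k : 2 * (k : ℝ) ≤ x := by
    rw [div_le_iff₀ hx] at hkx
    linarith
  have hratio : ∀ j < k - 1, 2 * (x ^ j / j.factorial) ≤ x ^ (j + 1) / (j + 1).factorial := by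
    intro j hj
    apply two_mul_pow_div_factorial_le
    have : ((j + 1 : ℕ) : ℝ) ≤ k := by exact_mod_cast (by omega : j + 1 ≤ k)
    push_cast at this
    linarith
  rw [one_sub_Hcdf]
  calc exp (-x) * ∑ j ∈ range (k - 1 + 1), x ^ j / j.factorial
      ≤ exp (-x) * (2 * (x ^ (k - 1) / (k - 1).factorial)) := by
        gcongr
        exact sum_range_succ_le_two_mul (by simp) hratio
    _ = 2 * x ^ (k - 1) * Real.exp (-x) / (Nat.factorial (k - 1)) := by ring

/-- For every integer `k ≥ 1` and every real `x > 0` with `k/x ≤ 1/2`, the Gamma(k,1) tail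
satisfies `1 - H_k(x) ≤ 2 x^{k-1} e^{-x}/(k-1)!`. -/
theorem gamma_tail_bound (k : ℕ) (hk : 1 ≤ k) (x : ℝ) (hx : 0 < x)
    (hkx : (k : ℝ) / x ≤ 1 / 2) :
    1 - Hcdf k x ≤ 2 * x ^ (k - 1) * Real.exp (-x) / (Nat.factorial (k - 1)) :=
  gamma_tail_bound_general k x hx hkx
end
end

section
/- Let E_1, E_2, ... be i.i.d. exponential random variables with mean 1, S_m = E_1 + ... + E_m, and let (k(N))_{N ≥ 1} be positive integers with k(N)/N → 0 as N → ∞. Then for every ε > 0 the series Σ_N P( S_{k(N)} > ε (2 N k(N) log log(N k(N)))^{1/2} ) converges (the sum being taken over those N with log log(N k(N)) > 0). -/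
open MeasureTheory ProbabilityTheory Real Filter Set

/-! Chernoff's bound at parameter `1/2` gives `P(S_k > x) ≤ 2 ^ k * exp (-x / 2)`. Because
`k(N) = o(N)` and `log N = o(√N)`, eventually `k(N) log 2 + 2 log N ≤ (ε / 2) √(N k(N))`, and
`log log (N k(N)) ≥ 1`, so the `N`-th term is at most `N⁻²`. -/

section ExponentialMGF

variable {r t : ℝ}

lemma lintegral_exp_mul_expMeasure (hr : 0 < r) (ht : t < r) :
    ∫⁻ x, ENNReal.ofReal (exp (t * x)) ∂expMeasure r = ENNReal.ofReal (r / (r - t)) := by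
  have hpdf : Measurable (exponentialPDF r) := (measurable_exponentialPDFReal r).ennreal_ofReal
  have hint : IntegrableOn (fun x => r * exp ((t - r) * x)) (Ioi 0) :=
    (integrableOn_exp_mul_Ioi (by linarith) 0).const_mul r
  have hdens : exponentialPDF r * (fun x => ENNReal.ofReal (exp (t * x)))
      = (Ici 0).indicator fun x => ENNReal.ofReal (r * exp ((t - r) * x)) := by
    ext x
    by_cases hx : 0 ≤ x
    · rw [Pi.mul_apply, exponentialPDF_of_nonneg hx, indicator_of_mem (mem_Ici.mpr hx),
        ← ENNReal.ofReal_mul (by positivity), mul_assoc, ← exp_add]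
      ring_nf
    · rw [Pi.mul_apply, exponentialPDF_of_neg (not_le.mp hx), zero_mul,
        indicator_of_notMem (by simpa using hx)]
  rw [show expMeasure r = volume.withDensity (exponentialPDF r) from rfl,
    lintegral_withDensity_eq_lintegral_mul _ hpdf (by fun_prop), hdens,
    lintegral_indicator measurableSet_Ici, setLIntegral_congr Ioi_ae_eq_Ici.symm,
    ← ofReal_integral_eq_lintegral_ofReal hint (ae_of_all _ fun x => by positivity),
    integral_const_mul, integral_exp_mul_Ioi (by linarith)]
  congr 1
  rw [mul_zero, exp_zero, ← neg_sub r t, div_neg, neg_div, neg_neg, mul_one_div]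

lemma integrable_exp_mul_expMeasure (hr : 0 < r) (ht : t < r) :
    Integrable (fun x => exp (t * x)) (expMeasure r) := by
  rw [← lintegral_ofReal_ne_top_iff_integrable (by fun_prop) (ae_of_all _ fun x => by positivity),
    lintegral_exp_mul_expMeasure hr ht]
  exact ENNReal.ofReal_ne_top

lemma mgf_id_expMeasure (hr : 0 < r) (ht : t < r) : mgf id (expMeasure r) t = r / (r - t) := by
  rw [mgf, integral_eq_lintegral_of_nonneg_ae (ae_of_all _ fun x => by positivity) (by fun_prop)]
  simp only [id, lintegral_exp_mul_expMeasure hr ht]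
  exact ENNReal.toReal_ofReal (div_nonneg hr.le (by linarith))

end ExponentialMGF

section Chernoff

variable {Ω : Type*} [MeasurableSpace Ω] {μ : Measure Ω} {X : ℕ → Ω → ℝ} {ν : Measure ℝ} {t : ℝ}

lemma measureReal_lt_sum_range_le (hmeas : ∀ i, Measurable (X i)) (hindep : iIndepFun X μ)
    (hdist : ∀ i, μ.map (X i) = ν) (ht : 0 ≤ t) (hint : Integrable (fun x => exp (t * x)) ν)
    (n : ℕ) (x : ℝ) :
    μ.real {ω | x < ∑ j ∈ Finset.range n, X j ω} ≤ exp (-t * x) * mgf id ν t ^ n := by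
  have := hindep.isProbabilityMeasure
  have hmgf : ∀ i, mgf (X i) μ t = mgf id ν t := fun i => by
    rw [← hdist i, mgf_id_map (hmeas i).aemeasurable]
  have hint_i : ∀ i, Integrable (fun ω => exp (t * X i ω)) μ := fun i => by
    rw [← hdist i] at hint
    exact (integrable_map_measure (by fun_prop) (hmeas i).aemeasurable).mp hint
  calc μ.real {ω | x < ∑ j ∈ Finset.range n, X j ω}
      ≤ μ.real {ω | x ≤ (∑ j ∈ Finset.range n, X j) ω} :=
        measureReal_mono (fun ω hω => by simpa using le_of_lt hω)
    _ ≤ exp (-t * x) * mgf (∑ j ∈ Finset.range n, X j) μ t :=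
        measure_ge_le_exp_mul_mgf x ht (hindep.integrable_exp_mul_sum hmeas fun i _ => hint_i i)
    _ = exp (-t * x) * mgf id ν t ^ n := by
        rw [hindep.mgf_sum hmeas, Finset.prod_congr rfl fun i _ => hmgf i, Finset.prod_const,
          Finset.card_range]

lemma measureReal_lt_sum_range_le_of_map_eq_expMeasure {r : ℝ} (hmeas : ∀ i, Measurable (X i))
    (hindep : iIndepFun X μ) (hdist : ∀ i, μ.map (X i) = expMeasure r) (ht : 0 ≤ t) (htr : t < r)
    (n : ℕ) (x : ℝ) :
    μ.real {ω | x < ∑ j ∈ Finset.range n, X j ω} ≤ exp (-t * x) * (r / (r - t)) ^ n := by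
  rw [← mgf_id_expMeasure (ht.trans_lt htr) htr]
  exact measureReal_lt_sum_range_le hmeas hindep hdist ht
    (integrable_exp_mul_expMeasure (ht.trans_lt htr) htr) n x

end Chernoff

lemma eventually_log_le_mul_sqrt {c : ℝ} (hc : 0 < c) : ∀ᶠ x : ℝ in atTop, log x ≤ c * √x := by
  filter_upwards [(isLittleO_log_rpow_atTop one_half_pos).bound hc, eventually_ge_atTop 0]
    with x hx hx0
  rw [norm_eq_abs, norm_of_nonneg (by positivity), ← sqrt_eq_rpow] at hx
  exact (le_abs_self _).trans hx

section Asymptotics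

variable {k : ℕ → ℕ}

lemma eventually_one_le_log_log_mul (hk : ∀ N, 1 ≤ k N) :
    ∀ᶠ N : ℕ in atTop, 1 ≤ log (log (N * k N)) := by
  have hloglog : Tendsto (fun x => log (log x)) atTop atTop :=
    tendsto_log_atTop.comp tendsto_log_atTop
  filter_upwards [(hloglog.comp tendsto_natCast_atTop_atTop).eventually_ge_atTop 1,
    (tendsto_log_atTop.comp tendsto_natCast_atTop_atTop).eventually_gt_atTop 0,
    eventually_gt_atTop 0] with N hN hlog hN0
  have hNk : (N : ℝ) ≤ N * k N := le_mul_of_one_le_right (Nat.cast_nonneg N) (mod_cast hk N)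
  exact hN.trans (log_le_log hlog (log_le_log (mod_cast hN0) hNk))

lemma eventually_mul_log_two_add_two_mul_log_le (hk : ∀ N, 1 ≤ k N)
    (hkN : Tendsto (fun N : ℕ => (k N : ℝ) / N) atTop (nhds 0)) {c : ℝ} (hc : 0 < c) :
    ∀ᶠ N : ℕ in atTop, k N * log 2 + 2 * log N ≤ c * √(N * k N) := by
  filter_upwards [hkN.eventually (eventually_le_nhds (by positivity : 0 < (c / (2 * log 2)) ^ 2)),
    tendsto_natCast_atTop_atTop.eventually (eventually_log_le_mul_sqrt (by positivity : 0 < c / 4)),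
    eventually_gt_atTop 0] with N hkN hlogN hN0
  have hN : (0 : ℝ) < N := mod_cast hN0
  have hK : (1 : ℝ) ≤ k N := mod_cast hk N
  have hfirst : k N * log 2 ≤ c / 2 * √(N * k N) := by
    have hkN' : k N * log 2 ^ 2 ≤ (c / 2) ^ 2 * N := by
      rw [div_le_iff₀ hN, div_pow, mul_pow, div_mul_eq_mul_div, le_div_iff₀ (by positivity)] at hkN
      linarith
    rw [show c / 2 * √(N * k N) = √((c / 2) ^ 2 * (N * k N)) by
      rw [sqrt_mul (sq_nonneg (c / 2)), sqrt_sq (by positivity)]]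
    apply le_sqrt_of_sq_le
    calc (k N * log 2) ^ 2 = k N * (k N * log 2 ^ 2) := by ring
      _ ≤ k N * ((c / 2) ^ 2 * N) := by gcongr
      _ = (c / 2) ^ 2 * (N * k N) := by ring
  have hsecond : 2 * log N ≤ c / 2 * √(N * k N) := by
    calc 2 * log N ≤ c / 2 * √N := by linarith
      _ ≤ c / 2 * √(N * k N) := by gcongr; exact le_mul_of_one_le_right hN.le hK
  linarith

end Asymptotics

theorem summable_prob_Sk_large_general {Ω : Type*} [MeasurableSpace Ω] (μ : Measure Ω)
    (E : ℕ → Ω → ℝ) (hmeas : ∀ i, Measurable (E i))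
    (hindep : iIndepFun E μ)
    (hdist : ∀ i, Measure.map (E i) μ = expMeasure 1)
    (k : ℕ → ℕ) (hk : ∀ N, 1 ≤ k N)
    (hkN : Tendsto (fun N : ℕ => (k N : ℝ) / N) atTop (nhds 0))
    (ε : ℝ) (hε : 0 < ε) :
    Summable (fun N : ℕ =>
      if 0 < Real.log (Real.log ((N : ℝ) * k N)) then
        (μ {ω | ε * Real.sqrt (2 * N * k N * Real.log (Real.log ((N : ℝ) * k N))) <
            ∑ j ∈ Finset.range (k N), E j ω}).toReal
      else 0) := by
  refine Summable.of_norm_bounded_eventually_nat (summable_one_div_nat_pow.mpr one_lt_two) ?_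
  filter_upwards [eventually_one_le_log_log_mul hk,
    eventually_mul_log_two_add_two_mul_log_le hk hkN (half_pos hε), eventually_gt_atTop 0]
    with N hL hbound hN0
  set L := log (log ((N : ℝ) * k N))
  have hN : (0 : ℝ) < N := mod_cast hN0
  have hchernoff := measureReal_lt_sum_range_le_of_map_eq_expMeasure hmeas hindep hdist
    (by norm_num : (0 : ℝ) ≤ 1 / 2) (by norm_num) (k N) (ε * √(2 * N * k N * L))
  rw [show (1 : ℝ) / (1 - 1 / 2) = 2 by norm_num] at hchernoff
  rw [if_pos (by linarith), norm_of_nonneg ENNReal.toReal_nonneg]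
  have hsqrt : √(N * k N) ≤ √(2 * N * k N * L) := sqrt_le_sqrt (by
    nlinarith [mul_le_mul_of_nonneg_left hL (by positivity : (0 : ℝ) ≤ N * k N)])
  calc μ.real {ω | ε * √(2 * N * k N * L) < ∑ j ∈ Finset.range (k N), E j ω}
      ≤ exp (-(1 / 2) * (ε * √(2 * N * k N * L))) * 2 ^ k N := hchernoff
    _ = exp (k N * log 2 - ε / 2 * √(2 * N * k N * L)) := by
        rw [show (2 : ℝ) ^ k N = exp (k N * log 2) by rw [exp_nat_mul, exp_log two_pos],
          ← exp_add]
        ring_nf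
    _ ≤ exp (-(2 * log N)) := exp_le_exp.mpr (by nlinarith)
    _ = 1 / N ^ 2 := by
        rw [exp_neg, ← Nat.cast_ofNat, ← log_pow, exp_log (by positivity), one_div]

/-- Let `E_1, E_2, ...` be i.i.d. exponential mean-1 random variables,
`S_m = E_1 + ... + E_m`, and `(k(N))` positive integers with `k(N)/N → 0`. Then for every
`ε > 0` the series `Σ_N P(S_{k(N)} > ε (2 N k(N) log log(N k(N)))^{1/2})` converges
(the sum being over those `N` with `log log(N k(N)) > 0`). -/
theorem summable_prob_Sk_large {Ω : Type*} [MeasurableSpace Ω] (μ : Measure Ω)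
    [IsProbabilityMeasure μ] (E : ℕ → Ω → ℝ) (hmeas : ∀ i, Measurable (E i))
    (hindep : iIndepFun E μ)
    (hdist : ∀ i, Measure.map (E i) μ = expMeasure 1)
    (k : ℕ → ℕ) (hk : ∀ N, 1 ≤ k N)
    (hkN : Tendsto (fun N : ℕ => (k N : ℝ) / N) atTop (nhds 0))
    (ε : ℝ) (hε : 0 < ε) :
    Summable (fun N : ℕ =>
      if 0 < Real.log (Real.log ((N : ℝ) * k N)) then
        (μ {ω | ε * Real.sqrt (2 * N * k N * Real.log (Real.log ((N : ℝ) * k N))) <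
            ∑ j ∈ Finset.range (k N), E j ω}).toReal
      else 0) :=
  summable_prob_Sk_large_general μ E hmeas hindep hdist k hk hkN ε hε
end
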